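/- The multiresolution median graph filter is permutation equivariant: for coefficients w_0,…,w_K, one has ∑_{k=0}^K w_k med((Pᵀ S P)^k, Pᵀ x) = Pᵀ ∑_{k=0}^K w_k med(S^k, x) for every permutation matrix P. -/

import Mathlib

open Matrix Finset

/-- `P` is a permutation matrix. -/
def IsPermMatrix {N : ℕ} (P : Matrix (Fin N) (Fin N) ℝ) : Prop :=
  ∃ σ : Equiv.Perm (Fin N), P = σ.permMatrix ℝ


/-- The graph median (upper median) operator:
`[med(S,x)]_i` is the element at position `⌊n/2⌋ + 1` (1-indexed) of the sorted
list of values `{ x_j : [S]_{ij} ≠ 0 }`, where `n` is the neighborhood size. -/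
noncomputable def gmed {N : ℕ} (S : Matrix (Fin N) (Fin N) ℝ)
    (x : Fin N → ℝ) : Fin N → ℝ :=
  fun i =>
    let m : Multiset ℝ :=
      Multiset.map x (Finset.univ.filter (fun j => S i j ≠ 0)).val
    (m.sort (· ≤ ·)).getD (Multiset.card m / 2) 0

lemma permT_mulVec {N : ℕ} (σ : Equiv.Perm (Fin N)) (y : Fin N → ℝ) (i : Fin N) :
    ((σ.permMatrix ℝ)ᵀ).mulVec y i = y (σ.symm i) := by
  simp only [Matrix.mulVec, dotProduct, Matrix.transpose_apply,
    Equiv.Perm.permMatrix, PEquiv.toMatrix_apply, Equiv.toPEquiv_apply,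
    Option.mem_def, Option.some.injEq]
  rw [Finset.sum_eq_single (σ.symm i)]
  · simp
  · intro b _ hb
    rw [if_neg, zero_mul]
    intro h
    exact hb (by simp [← h])
  · simp

lemma permT_eq {N : ℕ} (σ : Equiv.Perm (Fin N)) :
    (σ.permMatrix ℝ)ᵀ = (σ.symm.toPEquiv.toMatrix : Matrix (Fin N) (Fin N) ℝ) := by
  rw [Equiv.toPEquiv_symm, PEquiv.toMatrix_symm]

lemma permT_mul_perm {N : ℕ} (σ : Equiv.Perm (Fin N)) :
    (σ.permMatrix ℝ)ᵀ * σ.permMatrix ℝ = 1 := by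
  rw [permT_eq, show σ.permMatrix ℝ = (σ.toPEquiv.toMatrix : Matrix (Fin N) (Fin N) ℝ) from rfl,
    ← PEquiv.toMatrix_trans, ← Equiv.toPEquiv_trans]
  simp [PEquiv.toMatrix_refl]

lemma perm_mul_permT {N : ℕ} (σ : Equiv.Perm (Fin N)) :
    σ.permMatrix ℝ * (σ.permMatrix ℝ)ᵀ = 1 := by
  rw [permT_eq, show σ.permMatrix ℝ = (σ.toPEquiv.toMatrix : Matrix (Fin N) (Fin N) ℝ) from rfl,
    ← PEquiv.toMatrix_trans, ← Equiv.toPEquiv_trans]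
  simp [PEquiv.toMatrix_refl]

lemma permT_conj {N : ℕ} (σ : Equiv.Perm (Fin N)) (M : Matrix (Fin N) (Fin N) ℝ) :
    (σ.permMatrix ℝ)ᵀ * M * σ.permMatrix ℝ = M.submatrix σ.symm σ.symm := by
  rw [permT_eq, PEquiv.toMatrix_toPEquiv_mul,
    show σ.permMatrix ℝ = (σ.toPEquiv.toMatrix : Matrix (Fin N) (Fin N) ℝ) from rfl,
    PEquiv.mul_toMatrix_toPEquiv]
  ext i j
  simp

lemma permT_conj_pow {N : ℕ} (σ : Equiv.Perm (Fin N)) (M : Matrix (Fin N) (Fin N) ℝ)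
    (k : ℕ) :
    ((σ.permMatrix ℝ)ᵀ * M * σ.permMatrix ℝ) ^ k
      = (σ.permMatrix ℝ)ᵀ * M ^ k * σ.permMatrix ℝ := by
  induction k with
  | zero =>
    rw [pow_zero, pow_zero, Matrix.mul_one, permT_mul_perm]
  | succ k ih =>
    rw [pow_succ, ih, pow_succ]
    simp only [Matrix.mul_assoc]
    rw [← Matrix.mul_assoc (σ.permMatrix ℝ) ((σ.permMatrix ℝ)ᵀ), perm_mul_permT,
      Matrix.one_mul]

lemma gmed_submatrix {N : ℕ} (σ : Equiv.Perm (Fin N)) (M : Matrix (Fin N) (Fin N) ℝ)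
    (x : Fin N → ℝ) (i : Fin N) :
    gmed (M.submatrix σ.symm σ.symm) (fun j => x (σ.symm j)) i = gmed M x (σ.symm i) := by
  have hset : (Finset.univ.filter (fun j => M (σ.symm i) (σ.symm j) ≠ 0))
      = (Finset.univ.filter (fun j => M (σ.symm i) j ≠ 0)).map σ.toEmbedding := by
    ext j
    simp only [Finset.mem_filter, Finset.mem_univ, true_and, Finset.mem_map,
      Equiv.coe_toEmbedding]
    constructor
    · intro h; exact ⟨σ.symm j, h, by simp⟩
    · rintro ⟨a, ha, rfl⟩; simpa using ha
  have hm : Multiset.map (fun j => x (σ.symm j))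
        (Finset.univ.filter (fun j => M (σ.symm i) (σ.symm j) ≠ 0)).val
      = Multiset.map x (Finset.univ.filter (fun j => M (σ.symm i) j ≠ 0)).val := by
    rw [hset, Finset.map_val, Multiset.map_map,
      show ((fun j => x (σ.symm j)) ∘ σ.toEmbedding) = x from funext fun a => by simp]
  unfold gmed
  simp only [Matrix.submatrix_apply, hm]
  exact congrArg (fun m : Multiset ℝ => (m.sort (· ≤ ·)).getD (Multiset.card m / 2) 0) hm

/-- The multiresolution median graph filter is permutation equivariant. -/
theorem multiresolution_gmed_perm_equivariant {N K : ℕ}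
    (S P : Matrix (Fin N) (Fin N) ℝ) (hP : IsPermMatrix P)
    (hS : ∀ k ≤ K, ∀ i, (S ^ k) i i ≠ 0)
    (w : ℕ → ℝ) (x : Fin N → ℝ) :
    ∑ k ∈ Finset.range (K + 1), w k • gmed ((Pᵀ * S * P) ^ k) (Pᵀ.mulVec x)
      = Pᵀ.mulVec (∑ k ∈ Finset.range (K + 1), w k • gmed (S ^ k) x) := by
  obtain ⟨σ, rfl⟩ := hP
  funext i
  rw [permT_mulVec σ]
  simp only [Finset.sum_apply, Pi.smul_apply, smul_eq_mul]
  refine Finset.sum_congr rfl fun k _ => ?_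
  congr 1
  have hx : (σ.permMatrix ℝ)ᵀ.mulVec x = fun j => x (σ.symm j) := by
    funext j; exact permT_mulVec σ x j
  rw [permT_conj_pow, permT_conj, hx, gmed_submatrix]
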